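/- Let (T, X, Y) be drawn from the Razborov distribution (n = 4l−1), let A, B form the Markov chain A ↔ X ↔ Y ↔ B with Pr[A = B = 1] > 0, let (X', Y', T') denote (X, Y, T) conditioned on A = B = 1, and let δ > 0. Define B¹_x = { t₂ : S(X'_{t₂} || X_{t₂}) > 100δn } and B¹_y = { t₁ : S(Y'_{t₁} || Y_{t₁}) > 100δn }, where X'_{t₂}, X_{t₂} are the distributions of X' given T₂' = t₂ and of X given T₂ = t₂ (and symmetrically for Y with T₁). Then: (1) if E_{y←Y'} S(X'_y || X_y) ≤ δn, then Pr[A = B = 1 and T₂ ∈ B¹_x] ≤ (1/100)·Pr[A = B = 1]; and (2) if E_{x←X'} S(Y'_x || Y_x) ≤ δn, then Pr[A = B = 1 and T₁ ∈ B¹_y] ≤ (1/100)·Pr[A = B = 1]. -/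

import Mathlib

open scoped BigOperators ENNReal
open Classical

noncomputable section

/-- `p` is a probability distribution on the finite type `α`. -/
def IsDist {α : Type*} [Fintype α] (p : α → ℝ) : Prop :=
  (∀ a, 0 ≤ p a) ∧ ∑ a, p a = 1

/-- Relative entropy (base 2) `S(p‖q)`. -/
def relEnt {α : Type*} [Fintype α] (p q : α → ℝ) : ℝ :=
  ∑ a, if 0 < p a then p a * Real.logb 2 (p a / q a) else 0

/-- Relative min-entropy `S∞(p‖q) = max_{a : p a > 0} log (p a / q a)`. -/
def relMinEnt {α : Type*} [Fintype α] (p q : α → ℝ) : ℝ :=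
  sSup {r | ∃ a, 0 < p a ∧ r = Real.logb 2 (p a / q a)}

/-- Marginal on the first component. -/
def margX {α β : Type*} [Fintype α] [Fintype β] (p : α × β → ℝ) : α → ℝ :=
  fun x => ∑ y, p (x, y)

/-- Marginal on the second component. -/
def margY {α β : Type*} [Fintype α] [Fintype β] (p : α × β → ℝ) : β → ℝ :=
  fun y => ∑ x, p (x, y)

/-- Conditional distribution of the second component given the first equals `x`. -/
def condY {α β : Type*} [Fintype α] [Fintype β] (p : α × β → ℝ) (x : α) : β → ℝ :=
  fun y => p (x, y) / margX p x

/-- Conditional distribution of the first component given the second equals `y`. -/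
def condX {α β : Type*} [Fintype α] [Fintype β] (p : α × β → ℝ) (y : β) : α → ℝ :=
  fun x => p (x, y) / margY p y

/-- `crent^μ_𝒳(λ) = E_{x←X₁} S((Y₁)_x ‖ Y_x)`. -/
def crentX {α β : Type*} [Fintype α] [Fintype β] (lam mu : α × β → ℝ) : ℝ :=
  ∑ x, margX lam x * relEnt (condY lam x) (condY mu x)

/-- `crent^μ_𝒴(λ) = E_{y←Y₁} S((X₁)_y ‖ X_y)`. -/
def crentY {α β : Type*} [Fintype α] [Fintype β] (lam mu : α × β → ℝ) : ℝ :=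
  ∑ y, margY lam y * relEnt (condX lam y) (condX mu y)

/-- `λ` is one-way for `μ` with respect to `𝒳`: `λ(y|x) = μ(y|x)` on the support of `λ`. -/
def OneWayX {α β : Type*} [Fintype α] [Fintype β] (lam mu : α × β → ℝ) : Prop :=
  ∀ x y, 0 < lam (x, y) → condY lam x y = condY mu x y

/-- `λ` is one-way for `μ` with respect to `𝒴`: `λ(x|y) = μ(x|y)` on the support of `λ`. -/
def OneWayY {α β : Type*} [Fintype α] [Fintype β] (lam mu : α × β → ℝ) : Prop :=
  ∀ x y, 0 < lam (x, y) → condX lam y x = condX mu y x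

/-- `λ` is SM-like for `μ`. -/
def SMLike {α β : Type*} [Fintype α] [Fintype β] (lam mu : α × β → ℝ) : Prop :=
  ∃ θ : α × β → ℝ, IsDist θ ∧ OneWayX θ mu ∧ OneWayY lam θ

/-- `err_{f,S}(λ) = min_{z ∈ S} Pr_{(x,y)←λ}[(x,y,z) ∉ f]`. -/
def errRel {α β γ : Type*} [Fintype α] [Fintype β] (f : Set (α × β × γ)) (S : Set γ)
    (lam : α × β → ℝ) : ℝ :=
  sInf {e | ∃ z ∈ S, e = ∑ p : α × β, if (p.1, p.2, z) ∉ f then lam p else 0}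

/-- `ess^μ(f,S) = 1 − Pr_{(x,y)←μ}[∃ z ∉ S, (x,y,z) ∈ f]`. -/
def ess {α β γ : Type*} [Fintype α] [Fintype β] (f : Set (α × β × γ)) (S : Set γ)
    (mu : α × β → ℝ) : ℝ :=
  1 - ∑ p : α × β, if ∃ z ∉ S, (p.1, p.2, z) ∈ f then mu p else 0

/-- The two-way `ε`-error conditional relative entropy bound `crent^{2,μ}_ε(f,S)`
(`+∞` if no feasible `λ` exists). -/
def crent2 {α β γ : Type*} [Fintype α] [Fintype β] (f : Set (α × β × γ)) (S : Set γ)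
    (mu : α × β → ℝ) (ε : ℝ) : ℝ≥0∞ :=
  sInf {c | ∃ lam : α × β → ℝ, IsDist lam ∧ SMLike lam mu ∧ errRel f S lam ≤ ε ∧
    c = ENNReal.ofReal (crentX lam mu + crentY lam mu)}

/-- The two-way `ε`-error relative min-entropy bound `ment^{2,μ}_ε(f,S)`
(`+∞` if no feasible `λ` exists). -/
def ment2 {α β γ : Type*} [Fintype α] [Fintype β] (f : Set (α × β × γ)) (S : Set γ)
    (mu : α × β → ℝ) (ε : ℝ) : ℝ≥0∞ :=
  sInf {c | ∃ lam : α × β → ℝ, IsDist lam ∧ SMLike lam mu ∧ errRel f S lam ≤ ε ∧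
    c = ENNReal.ofReal (relMinEnt lam mu)}

/-- The `k`-fold product distribution `μ^k` on `𝒳^k × 𝒴^k`. -/
def prodDist {α β : Type*} [Fintype α] [Fintype β] (mu : α × β → ℝ) (k : ℕ) :
    (Fin k → α) × (Fin k → β) → ℝ :=
  fun p => ∏ i, mu (p.1 i, p.2 i)

/-- The `k`-fold product relation `f^k`. -/
def relPow {α β γ : Type*} (f : Set (α × β × γ)) (k : ℕ) :
    Set ((Fin k → α) × (Fin k → β) × (Fin k → γ)) :=
  {p | ∀ i, (p.1 i, p.2.1 i, p.2.2 i) ∈ f}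


/-- A valid value `t = (t₁, t₂, i)` of the random partition `T`:
`t₁, t₂` are disjoint sets of size `2l − 1` not containing `i`
(together with `{i}` they partition `[n]` when `n = 4l − 1`). -/
def ValidT (l : ℕ) {n : ℕ} (t : Finset (Fin n) × Finset (Fin n) × Fin n) : Prop :=
  t.1.card = 2 * l - 1 ∧ t.2.1.card = 2 * l - 1 ∧ Disjoint t.1 t.2.1 ∧
    t.2.2 ∉ t.1 ∧ t.2.2 ∉ t.2.1

/-- The support of the Razborov distribution: triples `(t, x, y)` with `t` a valid
partition, `x ⊆ t₁ ∪ {i}` of size `l`, and `y ⊆ t₂ ∪ {i}` of size `l`. -/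
def razSupp (l n : ℕ) :
    Finset ((Finset (Fin n) × Finset (Fin n) × Fin n) × Finset (Fin n) × Finset (Fin n)) :=
  Finset.univ.filter (fun q =>
    ValidT l q.1 ∧ q.2.1 ⊆ insert q.1.2.2 q.1.1 ∧ q.2.1.card = l ∧
      q.2.2 ⊆ insert q.1.2.2 q.1.2.1 ∧ q.2.2.card = l)

/-- The Razborov distribution, as the joint distribution of `(T, X, Y)`:
uniform over its support (all conditional fibers have equal size). -/
def razDist (l n : ℕ) :
    (Finset (Fin n) × Finset (Fin n) × Fin n) × Finset (Fin n) × Finset (Fin n) → ℝ :=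
  fun q => if q ∈ razSupp l n then 1 / ((razSupp l n).card : ℝ) else 0

/-- The marginal of the Razborov distribution on `(X, Y)`. -/
def razXY (l n : ℕ) : Finset (Fin n) × Finset (Fin n) → ℝ :=
  fun p => ∑ t : Finset (Fin n) × Finset (Fin n) × Fin n, razDist l n (t, p.1, p.2)

/-- The set-disjointness function as a relation: `(x, y, z) ∈ disjRel` iff
`z = DISJ(x,y)`, i.e. `z = true` iff `x ∩ y = ∅`. -/
def disjRel (n : ℕ) : Set (Finset (Fin n) × Finset (Fin n) × Bool) :=
  {q | q.2.2 = decide (q.1 ∩ q.2.1 = ∅)}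


/-- Abbreviation for the sample space of `(T, X, Y)`. -/
abbrev RazSample (n : ℕ) :=
  (Finset (Fin n) × Finset (Fin n) × Fin n) × Finset (Fin n) × Finset (Fin n)

/-- `Pr[A = B = 1]`, where conditioned on `(T,X,Y) = (t,x,y)` the bits `A`, `B` are
independent with `Pr[A=1] = a x` and `Pr[B=1] = b y` (Markov chain `A ↔ X ↔ Y ↔ B`). -/
def prAB (l n : ℕ) (a b : Finset (Fin n) → ℝ) : ℝ :=
  ∑ q : RazSample n, razDist l n q * a q.2.1 * b q.2.2

/-- Distribution of `X'` (that is, `X` conditioned on `A = B = 1`) given `T₂' = t₂`. -/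
def condX'T2 (l n : ℕ) (a b : Finset (Fin n) → ℝ) (t₂ : Finset (Fin n)) :
    Finset (Fin n) → ℝ := fun x =>
  (∑ q : RazSample n, if q.1.2.1 = t₂ ∧ q.2.1 = x then razDist l n q * a q.2.1 * b q.2.2 else 0) /
  (∑ q : RazSample n, if q.1.2.1 = t₂ then razDist l n q * a q.2.1 * b q.2.2 else 0)

/-- Distribution of `X` given `T₂ = t₂`. -/
def condXT2 (l n : ℕ) (t₂ : Finset (Fin n)) : Finset (Fin n) → ℝ := fun x =>
  (∑ q : RazSample n, if q.1.2.1 = t₂ ∧ q.2.1 = x then razDist l n q else 0) /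
  (∑ q : RazSample n, if q.1.2.1 = t₂ then razDist l n q else 0)

/-- Distribution of `Y'` (that is, `Y` conditioned on `A = B = 1`) given `T₁' = t₁`. -/
def condY'T1 (l n : ℕ) (a b : Finset (Fin n) → ℝ) (t₁ : Finset (Fin n)) :
    Finset (Fin n) → ℝ := fun y =>
  (∑ q : RazSample n, if q.1.1 = t₁ ∧ q.2.2 = y then razDist l n q * a q.2.1 * b q.2.2 else 0) /
  (∑ q : RazSample n, if q.1.1 = t₁ then razDist l n q * a q.2.1 * b q.2.2 else 0)

/-- Distribution of `Y` given `T₁ = t₁`. -/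
def condYT1 (l n : ℕ) (t₁ : Finset (Fin n)) : Finset (Fin n) → ℝ := fun y =>
  (∑ q : RazSample n, if q.1.1 = t₁ ∧ q.2.2 = y then razDist l n q else 0) /
  (∑ q : RazSample n, if q.1.1 = t₁ then razDist l n q else 0)

/-- Marginal distribution of `Y'`. -/
def margY' (l n : ℕ) (a b : Finset (Fin n) → ℝ) : Finset (Fin n) → ℝ := fun y =>
  (∑ q : RazSample n, if q.2.2 = y then razDist l n q * a q.2.1 * b q.2.2 else 0) /
    prAB l n a b

/-- Marginal distribution of `X'`. -/
def margX' (l n : ℕ) (a b : Finset (Fin n) → ℝ) : Finset (Fin n) → ℝ := fun x =>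
  (∑ q : RazSample n, if q.2.1 = x then razDist l n q * a q.2.1 * b q.2.2 else 0) /
    prAB l n a b

/-- Distribution of `X'` given `Y' = y`. -/
def condX'Y' (l n : ℕ) (a b : Finset (Fin n) → ℝ) (y : Finset (Fin n)) :
    Finset (Fin n) → ℝ := fun x =>
  (∑ q : RazSample n, if q.2.1 = x ∧ q.2.2 = y then razDist l n q * a q.2.1 * b q.2.2 else 0) /
  (∑ q : RazSample n, if q.2.2 = y then razDist l n q * a q.2.1 * b q.2.2 else 0)

/-- Distribution of `X` given `Y = y`. -/
def condXgY (l n : ℕ) (y : Finset (Fin n)) : Finset (Fin n) → ℝ := fun x =>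
  (∑ q : RazSample n, if q.2.1 = x ∧ q.2.2 = y then razDist l n q else 0) /
  (∑ q : RazSample n, if q.2.2 = y then razDist l n q else 0)

/-- Distribution of `Y'` given `X' = x`. -/
def condY'X' (l n : ℕ) (a b : Finset (Fin n) → ℝ) (x : Finset (Fin n)) :
    Finset (Fin n) → ℝ := fun y =>
  (∑ q : RazSample n, if q.2.1 = x ∧ q.2.2 = y then razDist l n q * a q.2.1 * b q.2.2 else 0) /
  (∑ q : RazSample n, if q.2.1 = x then razDist l n q * a q.2.1 * b q.2.2 else 0)

/-- Distribution of `Y` given `X = x`. -/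
def condYgX (l n : ℕ) (x : Finset (Fin n)) : Finset (Fin n) → ℝ := fun y =>
  (∑ q : RazSample n, if q.2.1 = x ∧ q.2.2 = y then razDist l n q else 0) /
  (∑ q : RazSample n, if q.2.1 = x then razDist l n q else 0)

/-!
Under the Razborov distribution, once `T₂ = t` is fixed, `X` is a uniform `l`-subset of the
complement of `t`, independent of `(I, Y)`. So the weight of `(T₂, X, Y)` factors as
`F(t, x) G(t, y)`, and conditioning on `A = B = 1` multiplies it by `α(x) β(y)`, which keeps that
form. For such weights the log-likelihood ratio of `X'` given `Y'` is the sum of those of `X'` given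
`T₂'` and of `T₂'` given `Y'`, so the chain rule reads
`E_y S(X'_y ‖ X_y) = E_t S(X'_t ‖ X_t) + E_y S(T₂'_y ‖ (T₂)_y) ≥ E_t S(X'_t ‖ X_t)`.
Hence `E_t S(X'_t ‖ X_t) ≤ δn`, and Markov's inequality bounds the weight of the `t` with
`S(X'_t ‖ X_t) > 100δn` by `1/100` of the total. Exchanging the two halves of the partition turns
the second statement into the first.
-/

section RelEnt

variable {ι κ : Type*} [Fintype ι] [Fintype κ]

lemma sub_div_log_le_ite_mul_logb {u v : ℝ} (hu : 0 ≤ u) (hv : 0 ≤ v) (huv : 0 < u → 0 < v) :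
    (u - v) / Real.log 2 ≤ if 0 < u then u * Real.logb 2 (u / v) else 0 := by
  have hlog2 : 0 < Real.log 2 := Real.log_pos one_lt_two
  split_ifs with h
  · have hv' := huv h
    rw [Real.logb, mul_div_assoc', div_le_div_iff_of_pos_right hlog2]
    have := Real.one_sub_inv_le_log_of_pos (div_pos h hv')
    rw [inv_div] at this
    calc u - v = u * (1 - v / u) := by field_simp
      _ ≤ u * Real.log (u / v) := mul_le_mul_of_nonneg_left this hu
  · rw [le_antisymm (not_lt.mp h) hu]
    exact div_nonpos_of_nonpos_of_nonneg (by linarith) hlog2.le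

theorem relEnt_nonneg {p q : κ → ℝ} (hp : ∀ x, 0 ≤ p x) (hq : ∀ x, 0 ≤ q x)
    (hpq : ∀ x, 0 < p x → 0 < q x) (hsum : ∑ x, q x ≤ ∑ x, p x) : 0 ≤ relEnt p q := by
  calc (0 : ℝ) ≤ ∑ x, (p x - q x) / Real.log 2 := by
        rw [← Finset.sum_div, Finset.sum_sub_distrib]
        exact div_nonneg (by linarith) (Real.log_pos one_lt_two).le
    _ ≤ relEnt p q :=
        Finset.sum_le_sum fun x _ => sub_div_log_le_ite_mul_logb (hp x) (hq x) (hpq x)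

lemma sum_pos_of_pos {f : κ → ℝ} (hf : ∀ x, 0 ≤ f x) (x : κ) (hx : 0 < f x) : 0 < ∑ x, f x :=
  Finset.sum_pos' (fun x _ => hf x) ⟨x, Finset.mem_univ _, hx⟩

lemma sum_pos_of_sum_pos {f g : κ → ℝ} (hf : ∀ x, 0 ≤ f x) (hg : ∀ x, 0 ≤ g x)
    (hfg : ∀ x, 0 < f x → 0 < g x) (h : 0 < ∑ x, f x) : 0 < ∑ x, g x := by
  obtain ⟨x, -, hx⟩ := (Finset.sum_pos_iff_of_nonneg fun x _ => hf x).mp h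
  exact sum_pos_of_pos hg x (hfg x hx)

lemma condX_pos {p : κ × ι → ℝ} (hp : ∀ z, 0 ≤ p z) {x : κ} {y : ι} (h : 0 < p (x, y)) :
    0 < condX p y x :=
  div_pos h (sum_pos_of_pos (fun x => hp (x, y)) x h)

lemma sum_condY (p : ι × κ → ℝ) (i : ι) : ∑ x, condY p i x = margX p i / margX p i := by
  simp only [condY, ← Finset.sum_div, margX]

theorem relEnt_condY_nonneg {p r : ι × κ → ℝ} (hp : ∀ z, 0 ≤ p z) (hr : ∀ z, 0 ≤ r z)
    (hpr : ∀ z, 0 < p z → 0 < r z) (i : ι) : 0 ≤ relEnt (condY p i) (condY r i) := by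
  have hP : 0 ≤ margX p i := Finset.sum_nonneg fun x _ => hp (i, x)
  rcases hP.eq_or_lt with hP0 | hPpos
  · have hzero : ∀ x, condY p i x = 0 := fun x => by simp [condY, ← hP0]
    simp [relEnt, hzero]
  have hRpos : 0 < margX r i :=
    sum_pos_of_sum_pos (fun x => hp (i, x)) (fun x => hr (i, x)) (fun x => hpr (i, x)) hPpos
  refine relEnt_nonneg (fun x => div_nonneg (hp _) hP) (fun x => div_nonneg (hr _) hRpos.le)
    (fun x hx => div_pos (hpr _ ((div_pos_iff_of_pos_right hPpos).mp hx)) hRpos) ?_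
  rw [sum_condY, sum_condY, div_self hPpos.ne', div_self hRpos.ne']

theorem crentX_nonneg {p r : ι × κ → ℝ} (hp : ∀ z, 0 ≤ p z) (hr : ∀ z, 0 ≤ r z)
    (hpr : ∀ z, 0 < p z → 0 < r z) : 0 ≤ crentX p r :=
  Finset.sum_nonneg fun i _ =>
    mul_nonneg (Finset.sum_nonneg fun x _ => hp (i, x)) (relEnt_condY_nonneg hp hr hpr i)

theorem margX_mul_relEnt_condY {p : ι × κ → ℝ} (hp : ∀ z, 0 ≤ p z) (i : ι) (q : κ → ℝ) :
    margX p i * relEnt (condY p i) q =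
      ∑ x, if 0 < p (i, x) then p (i, x) * Real.logb 2 (condY p i x / q x) else 0 := by
  have hP : 0 ≤ margX p i := Finset.sum_nonneg fun x _ => hp (i, x)
  rcases hP.eq_or_lt with hP0 | hPpos
  · have hzero : ∀ x, p (i, x) = 0 := fun x =>
      (Finset.sum_eq_zero_iff_of_nonneg fun x _ => hp (i, x)).mp hP0.symm x (Finset.mem_univ _)
    simp [← hP0, hzero]
  rw [relEnt, Finset.mul_sum]
  refine Finset.sum_congr rfl fun x _ => ?_
  simp only [condY, div_pos_iff_of_pos_right hPpos]
  split_ifs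
  · rw [← mul_assoc, mul_div_cancel₀ _ hPpos.ne']
  · rw [mul_zero]

lemma ite_pos_sum_mul {f : κ → ℝ} (hf : ∀ x, 0 ≤ f x) (c : ℝ) :
    (if 0 < ∑ x, f x then (∑ x, f x) * c else 0) = ∑ x, if 0 < f x then f x * c else 0 := by
  rcases (Finset.sum_nonneg fun x _ => hf x).eq_or_lt with h0 | hpos
  · have hzero : ∀ x, f x = 0 := fun x =>
      (Finset.sum_eq_zero_iff_of_nonneg fun x _ => hf x).mp h0.symm x (Finset.mem_univ _)
    simp [hzero]
  rw [if_pos hpos, Finset.sum_mul]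
  refine Finset.sum_congr rfl fun x _ => ?_
  split_ifs with h
  · rfl
  · rw [le_antisymm (not_lt.mp h) (hf x), zero_mul]

theorem crentY_eq_crentX_swap {p r : ι × κ → ℝ} :
    crentY p r = crentX (p ∘ Prod.swap) (r ∘ Prod.swap) := rfl

theorem sum_ite_lt_le_div {m D : ι → ℝ} (hm : ∀ i, 0 ≤ m i) (hD : ∀ i, 0 ≤ D i) {c : ℝ}
    (hc : 0 < c) : (∑ i, if c < D i then m i else 0) ≤ (∑ i, m i * D i) / c := by
  rw [Finset.sum_div]
  refine Finset.sum_le_sum fun i _ => ?_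
  rw [le_div_iff₀ hc]
  split_ifs with h
  · exact mul_le_mul_of_nonneg_left h.le (hm i)
  · rw [zero_mul]; exact mul_nonneg (hm i) (hD i)

end RelEnt

section CondIndep

variable {τ α β : Type*} {F : τ → α → ℝ} {G : τ → β → ℝ} {a : α → ℝ} {b : β → ℝ}

def condProd (F : τ → α → ℝ) (G : τ → β → ℝ) : τ → α → β → ℝ := fun t x y => F t x * G t y

-- Under `N`, `X` and `Y` are independent given `T`; `Λ` is `N` reweighted by `a x * b y`, the
-- unnormalised law conditioned on `A = B = 1`.
local notation "Λ" => condProd (fun t x => F t x * a x) (fun t y => G t y * b y)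
local notation "N" => condProd F G

lemma condProd_nonneg (hF : ∀ t x, 0 ≤ F t x) (hG : ∀ t y, 0 ≤ G t y) (t : τ) (x : α) (y : β) :
    0 ≤ N t x y :=
  mul_nonneg (hF t x) (hG t y)

lemma condProd_tilt_nonneg (hF : ∀ t x, 0 ≤ F t x) (hG : ∀ t y, 0 ≤ G t y)
    (ha : ∀ x, 0 ≤ a x) (hb : ∀ y, 0 ≤ b y) (t : τ) (x : α) (y : β) : 0 ≤ Λ t x y :=
  mul_nonneg (mul_nonneg (hF t x) (ha x)) (mul_nonneg (hG t y) (hb y))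

lemma pos_of_condProd_tilt_pos (hF : ∀ t x, 0 ≤ F t x) (hG : ∀ t y, 0 ≤ G t y)
    (ha : ∀ x, 0 ≤ a x) (hb : ∀ y, 0 ≤ b y) {t : τ} {x : α} {y : β} (h : 0 < Λ t x y) :
    0 < F t x ∧ 0 < a x ∧ 0 < G t y ∧ 0 < b y := by
  have hFa := pos_of_mul_pos_left h (mul_nonneg (hG t y) (hb y))
  have hGb := pos_of_mul_pos_right h (mul_nonneg (hF t x) (ha x))
  exact ⟨pos_of_mul_pos_left hFa (ha x), pos_of_mul_pos_right hFa (hF t x),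
    pos_of_mul_pos_left hGb (hb y), pos_of_mul_pos_right hGb (hG t y)⟩

lemma condProd_pos_of_tilt_pos (hF : ∀ t x, 0 ≤ F t x) (hG : ∀ t y, 0 ≤ G t y)
    (ha : ∀ x, 0 ≤ a x) (hb : ∀ y, 0 ≤ b y) {t : τ} {x : α} {y : β} (h : 0 < Λ t x y) :
    0 < N t x y := by
  obtain ⟨hFx, -, hGy, -⟩ := pos_of_condProd_tilt_pos hF hG ha hb h
  exact mul_pos hFx hGy

variable [Fintype τ] [Fintype α] [Fintype β]

def margTX (p : τ → α → β → ℝ) : τ × α → ℝ := fun z => ∑ y, p z.1 z.2 y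

def margXY (p : τ → α → β → ℝ) : α × β → ℝ := fun z => ∑ t, p t z.1 z.2

def margTY (p : τ → α → β → ℝ) : τ × β → ℝ := fun z => ∑ x, p z.1 x z.2

theorem crentX_margTX {L : τ → α → β → ℝ} (hL : ∀ t x y, 0 ≤ L t x y) (r : τ × α → ℝ) :
    crentX (margTX L) r = ∑ t, ∑ x, ∑ y, if 0 < L t x y then
      L t x y * Real.logb 2 (condY (margTX L) t x / condY r t x) else 0 := by
  refine Finset.sum_congr rfl fun t _ => ?_
  rw [margX_mul_relEnt_condY (p := margTX L) (fun z => Finset.sum_nonneg fun y _ => hL z.1 z.2 y)]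
  exact Finset.sum_congr rfl fun x _ => ite_pos_sum_mul (hL t x) _

lemma sum_comm_rev (f : τ → α → β → ℝ) :
    ∑ y, ∑ x, ∑ t, f t x y = ∑ t, ∑ x, ∑ y, f t x y := by
  rw [Finset.sum_comm]
  simp_rw [Finset.sum_comm (γ := β) (t := (Finset.univ : Finset τ))]
  rw [Finset.sum_comm]

theorem crentY_margXY {L : τ → α → β → ℝ} (hL : ∀ t x y, 0 ≤ L t x y) (r : α × β → ℝ) :
    crentY (margXY L) r = ∑ t, ∑ x, ∑ y, if 0 < L t x y then
      L t x y * Real.logb 2 (condX (margXY L) y x / condX r y x) else 0 := by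
  rw [crentY_eq_crentX_swap, ← sum_comm_rev]
  exact crentX_margTX (L := fun y x t => L t x y) (fun y x t => hL t x y) _

theorem crentY_margTY {L : τ → α → β → ℝ} (hL : ∀ t x y, 0 ≤ L t x y) (r : τ × β → ℝ) :
    crentY (margTY L) r = ∑ t, ∑ x, ∑ y, if 0 < L t x y then
      L t x y * Real.logb 2 (condX (margTY L) y t / condX r y t) else 0 := by
  rw [crentY_eq_crentX_swap]
  refine (crentX_margTX (L := fun y t x => L t x y) (fun y t x => hL t x y) _).trans ?_
  rw [Finset.sum_comm]
  exact Finset.sum_congr rfl fun t _ => Finset.sum_comm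


section Tilt

variable (hF : ∀ t x, 0 ≤ F t x) (hG : ∀ t y, 0 ≤ G t y) (ha : ∀ x, 0 ≤ a x) (hb : ∀ y, 0 ≤ b y)
include hF hG ha hb

theorem condX_margXY_ratio {t : τ} {x : α} {y : β} (h : 0 < Λ t x y) :
    condX (margXY Λ) y x / condX (margXY N) y x =
      condY (margTX Λ) t x / condY (margTX N) t x *
        (condX (margTY Λ) y t / condX (margTY N) y t) := by
  obtain ⟨hFx, hax, hGy, hby⟩ := pos_of_condProd_tilt_pos hF hG ha hb h
  simp only [condX, condY, margX, margY, margXY, margTX, margTY, condProd]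
  have eΛt : ∑ s, F s x * a x * (G s y * b y) = a x * b y * ∑ s, F s x * G s y := by
    rw [Finset.mul_sum]; exact Finset.sum_congr rfl fun s _ => by ring
  have eΛy : ∀ x', ∑ y', F t x' * a x' * (G t y' * b y') =
      F t x' * a x' * ∑ y', G t y' * b y' := fun x' => by rw [Finset.mul_sum]
  have eNy : ∀ x', ∑ y', F t x' * G t y' = F t x' * ∑ y', G t y' := fun x' => by
    rw [Finset.mul_sum]
  have eΛx : ∀ s, ∑ x', F s x' * a x' * (G s y * b y) = (∑ x', F s x' * a x') * (G s y * b y) :=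
    fun s => by rw [Finset.sum_mul]
  have eNx : ∀ s, ∑ x', F s x' * G s y = (∑ x', F s x') * G s y := fun s => by
    rw [Finset.sum_mul]
  rw [eΛt, Finset.sum_comm (γ := α), Finset.sum_comm (γ := α) (f := fun x' s => F s x' * G s y)]
  simp only [eΛy, eNy, eΛx, eNx, ← Finset.sum_mul]
  have hΦa : 0 < ∑ x', F t x' * a x' :=
    sum_pos_of_pos (fun x' => mul_nonneg (hF t x') (ha x')) x (mul_pos hFx hax)
  have hΦ : 0 < ∑ x', F t x' := sum_pos_of_pos (hF t) x hFx
  have hΓb : 0 < ∑ y', G t y' * b y' :=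
    sum_pos_of_pos (fun y' => mul_nonneg (hG t y') (hb y')) y (mul_pos hGy hby)
  have hΓ : 0 < ∑ y', G t y' := sum_pos_of_pos (hG t) y hGy
  have hNxy : 0 < ∑ s, F s x * G s y :=
    sum_pos_of_pos (fun s => mul_nonneg (hF s x) (hG s y)) t (mul_pos hFx hGy)
  field_simp

theorem crentY_margXY_eq_add :
    crentY (margXY Λ) (margXY N) = crentX (margTX Λ) (margTX N) + crentY (margTY Λ) (margTY N) := by
  have hΛ := condProd_tilt_nonneg hF hG ha hb
  rw [crentY_margXY hΛ, crentX_margTX hΛ, crentY_margTY hΛ]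
  simp only [← Finset.sum_add_distrib]
  refine Finset.sum_congr rfl fun t _ => Finset.sum_congr rfl fun x _ =>
    Finset.sum_congr rfl fun y _ => ?_
  split_ifs with h
  · have hB : 0 < condX (margXY Λ) y x / condX (margXY N) y x :=
      div_pos (condX_pos (fun z => Finset.sum_nonneg fun s _ => hΛ s z.1 z.2)
          (sum_pos_of_pos (fun s => hΛ s x y) t h))
        (condX_pos (fun z => Finset.sum_nonneg fun s _ => condProd_nonneg hF hG s z.1 z.2)
          (sum_pos_of_pos (fun s => condProd_nonneg hF hG s x y) t
            (condProd_pos_of_tilt_pos hF hG ha hb h)))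
    rw [condX_margXY_ratio hF hG ha hb h] at hB ⊢
    rw [Real.logb_mul (left_ne_zero_of_mul hB.ne') (right_ne_zero_of_mul hB.ne'), mul_add]
  · rw [add_zero]

lemma relEnt_condY_margTX_nonneg (t : τ) :
    0 ≤ relEnt (condY (margTX Λ) t) (condY (margTX N) t) :=
  relEnt_condY_nonneg
    (fun z => Finset.sum_nonneg fun y _ => condProd_tilt_nonneg hF hG ha hb z.1 z.2 y)
    (fun z => Finset.sum_nonneg fun y _ => condProd_nonneg hF hG z.1 z.2 y)
    (fun z => sum_pos_of_sum_pos (fun y => condProd_tilt_nonneg hF hG ha hb z.1 z.2 y)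
      (fun y => condProd_nonneg hF hG z.1 z.2 y) (fun _ => condProd_pos_of_tilt_pos hF hG ha hb)) t

theorem crentX_margTX_le_crentY_margXY :
    crentX (margTX Λ) (margTX N) ≤ crentY (margXY Λ) (margXY N) := by
  rw [crentY_margXY_eq_add hF hG ha hb, le_add_iff_nonneg_right, crentY_eq_crentX_swap]
  have hΛ := condProd_tilt_nonneg hF hG ha hb
  have hN := condProd_nonneg hF hG
  exact crentX_nonneg (fun z => Finset.sum_nonneg fun x _ => hΛ z.2 x z.1)
    (fun z => Finset.sum_nonneg fun x _ => hN z.2 x z.1)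
    (fun z => sum_pos_of_sum_pos (fun x => hΛ z.2 x z.1) (fun x => hN z.2 x z.1)
      (fun _ => condProd_pos_of_tilt_pos hF hG ha hb))

end Tilt

end CondIndep

section Fiber

variable {Q τ α β : Type*} [Fintype Q] [Fintype τ] [Fintype α] [Fintype β]
  [DecidableEq τ] [DecidableEq α] [DecidableEq β]

def joint (w : Q → ℝ) (T : Q → τ) (X : Q → α) (Y : Q → β) (t : τ) (x : α) (y : β) : ℝ :=
  ∑ q, if T q = t ∧ X q = x ∧ Y q = y then w q else 0

theorem sum_ite_eq_sum_joint (w : Q → ℝ) (T : Q → τ) (X : Q → α) (Y : Q → β)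
    (P : τ → α → β → Prop) [∀ t x y, Decidable (P t x y)] :
    (∑ q, if P (T q) (X q) (Y q) then w q else 0) =
      ∑ t, ∑ x, ∑ y, if P t x y then joint w T X Y t x y else 0 := by
  have hq : ∀ q, (if P (T q) (X q) (Y q) then w q else 0) =
      ∑ t, ∑ x, ∑ y, if P t x y then (if T q = t ∧ X q = x ∧ Y q = y then w q else 0) else 0 := by
    intro q
    rw [Fintype.sum_eq_single (T q), Fintype.sum_eq_single (X q), Fintype.sum_eq_single (Y q)]
    · simp
    all_goals intro _ h; simp [Ne.symm h]
  have hP : ∀ t x y, (if P t x y then joint w T X Y t x y else 0) =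
      ∑ q, if P t x y then (if T q = t ∧ X q = x ∧ Y q = y then w q else 0) else 0 := by
    intro t x y; split_ifs <;> simp [joint]
  simp only [hq, hP]
  rw [Finset.sum_comm]
  refine Finset.sum_congr rfl fun t _ => ?_
  rw [Finset.sum_comm]
  exact Finset.sum_congr rfl fun x _ => Finset.sum_comm

end Fiber

section Razborov

variable {l n : ℕ}

theorem mk_mem_razSupp_iff (hn : n = 4 * l - 1) {t₁ t₂ x y : Finset (Fin n)} {i : Fin n} :
    ((t₁, t₂, i), x, y) ∈ razSupp l n ↔ t₁ = t₂ᶜ.erase i ∧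
      (t₂.card = 2 * l - 1 ∧ x ⊆ t₂ᶜ ∧ x.card = l) ∧ (i ∉ t₂ ∧ y ⊆ insert i t₂ ∧ y.card = l) := by
  have hcompl : t₂ᶜ.card = n - t₂.card := by rw [Finset.card_compl, Fintype.card_fin]
  rw [razSupp, Finset.mem_filter, ValidT]
  simp only [Finset.mem_univ, true_and]
  constructor
  · rintro ⟨⟨ht₁, ht₂, hdisj, hi₁, hi₂⟩, hx, hxl, hy, hyl⟩
    have hsub : t₁ ⊆ t₂ᶜ.erase i := fun j hj => Finset.mem_erase.mpr
      ⟨fun hji => hi₁ (hji ▸ hj), Finset.mem_compl.mpr (Finset.disjoint_left.mp hdisj hj)⟩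
    have ht₁_eq : t₁ = t₂ᶜ.erase i := Finset.eq_of_subset_of_card_le hsub (by
      rw [Finset.card_erase_of_mem (Finset.mem_compl.mpr hi₂), hcompl]; omega)
    refine ⟨ht₁_eq, ⟨ht₂, ?_, hxl⟩, hi₂, hy, hyl⟩
    rwa [ht₁_eq, Finset.insert_erase (Finset.mem_compl.mpr hi₂)] at hx
  · rintro ⟨rfl, ⟨ht₂, hx, hxl⟩, hi, hy, hyl⟩
    refine ⟨⟨?_, ht₂, ?_, Finset.notMem_erase _ _, hi⟩, ?_, hxl, hy, hyl⟩
    · rw [Finset.card_erase_of_mem (Finset.mem_compl.mpr hi), hcompl]; omega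
    · exact Finset.disjoint_left.mpr fun j hj => Finset.mem_compl.mp (Finset.mem_of_mem_erase hj)
    · rwa [Finset.insert_erase (Finset.mem_compl.mpr hi)]

def razF (l n : ℕ) (t x : Finset (Fin n)) : ℝ :=
  if t.card = 2 * l - 1 ∧ x ⊆ tᶜ ∧ x.card = l then 1 else 0

def razG (l n : ℕ) (t y : Finset (Fin n)) : ℝ :=
  (Finset.univ.filter fun i => i ∉ t ∧ y ⊆ insert i t ∧ y.card = l).card / (razSupp l n).card

theorem sum_razDist_fiber (hn : n = 4 * l - 1) (t x y : Finset (Fin n)) :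
    (∑ q : RazSample n, if q.1.2.1 = t ∧ q.2.1 = x ∧ q.2.2 = y then razDist l n q else 0) =
      razF l n t x * razG l n t y := by
  have hfiber : Finset.univ.filter (fun q : RazSample n =>
      (q.1.2.1 = t ∧ q.2.1 = x ∧ q.2.2 = y) ∧ q ∈ razSupp l n) =
      (Finset.univ.filter fun i => (t.card = 2 * l - 1 ∧ x ⊆ tᶜ ∧ x.card = l) ∧
        (i ∉ t ∧ y ⊆ insert i t ∧ y.card = l)).image fun i => ((tᶜ.erase i, t, i), x, y) := by
    ext ⟨⟨t₁, t₂, i⟩, x', y'⟩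
    simp only [Finset.mem_filter, Finset.mem_univ, true_and, Finset.mem_image,
      mk_mem_razSupp_iff hn, Prod.mk.injEq]
    constructor
    · rintro ⟨⟨rfl, rfl, rfl⟩, rfl, hx, hy⟩
      exact ⟨i, ⟨hx, hy⟩, ⟨rfl, rfl, rfl⟩, rfl, rfl⟩
    · rintro ⟨j, ⟨hx, hy⟩, ⟨rfl, rfl, rfl⟩, rfl, rfl⟩
      exact ⟨⟨rfl, rfl, rfl⟩, rfl, hx, hy⟩
  calc (∑ q : RazSample n, if q.1.2.1 = t ∧ q.2.1 = x ∧ q.2.2 = y then razDist l n q else 0)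
      = ∑ q ∈ Finset.univ.filter (fun q : RazSample n =>
          (q.1.2.1 = t ∧ q.2.1 = x ∧ q.2.2 = y) ∧ q ∈ razSupp l n),
          1 / ((razSupp l n).card : ℝ) := by
        rw [Finset.sum_filter]
        refine Finset.sum_congr rfl fun q _ => ?_
        simp only [razDist, ite_and]
    _ = razF l n t x * razG l n t y := by
        rw [hfiber, Finset.sum_image fun i _ j _ h => congrArg (fun q : RazSample n => q.1.2.2) h]
        by_cases hx : t.card = 2 * l - 1 ∧ x ⊆ tᶜ ∧ x.card = l
        · simp [razF, razG, hx, div_eq_mul_inv]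
        · simp [razF, hx]

def razJoint (l n : ℕ) (a b : Finset (Fin n) → ℝ) :
    Finset (Fin n) → Finset (Fin n) → Finset (Fin n) → ℝ :=
  joint (fun q : RazSample n => razDist l n q * a q.2.1 * b q.2.2) (·.1.2.1) (·.2.1) (·.2.2)

theorem razJoint_eq_condProd (hn : n = 4 * l - 1) (a b : Finset (Fin n) → ℝ) :
    razJoint l n a b =
      condProd (fun t x => razF l n t x * a x) (fun t y => razG l n t y * b y) := by
  funext t x y
  have hfactor : ∀ q : RazSample n,
      (if q.1.2.1 = t ∧ q.2.1 = x ∧ q.2.2 = y then razDist l n q * a q.2.1 * b q.2.2 else 0) =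
        (if q.1.2.1 = t ∧ q.2.1 = x ∧ q.2.2 = y then razDist l n q else 0) * (a x * b y) := by
    intro q
    split_ifs with h
    · rw [h.2.1, h.2.2, mul_assoc]
    · rw [zero_mul]
  simp only [razJoint, joint, hfactor, ← Finset.sum_mul, sum_razDist_fiber hn, condProd]
  ring

section Bridge

variable (l n) (a b : Finset (Fin n) → ℝ)

lemma sum_ite_eq_sum_razJoint (P : Finset (Fin n) → Finset (Fin n) → Finset (Fin n) → Prop)
    [∀ t x y, Decidable (P t x y)] :
    (∑ q : RazSample n, if P q.1.2.1 q.2.1 q.2.2 then razDist l n q * a q.2.1 * b q.2.2 else 0) =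
      ∑ t, ∑ x, ∑ y, if P t x y then razJoint l n a b t x y else 0 :=
  sum_ite_eq_sum_joint _ _ _ _ P

lemma condX'T2_eq_condY (t : Finset (Fin n)) :
    condX'T2 l n a b t = condY (margTX (razJoint l n a b)) t := by
  funext x
  rw [condX'T2, sum_ite_eq_sum_razJoint l n a b fun t' x' _ => t' = t ∧ x' = x,
    sum_ite_eq_sum_razJoint l n a b fun t' _ _ => t' = t]
  simp [condY, margX, margTX, ite_and, Finset.sum_ite_eq']

lemma condX'Y'_eq_condX (y : Finset (Fin n)) :
    condX'Y' l n a b y = condX (margXY (razJoint l n a b)) y := by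
  funext x
  rw [condX'Y', sum_ite_eq_sum_razJoint l n a b fun _ x' y' => x' = x ∧ y' = y,
    sum_ite_eq_sum_razJoint l n a b fun _ _ y' => y' = y]
  simp only [ite_and, Finset.sum_ite_irrel, Finset.sum_ite_eq', Finset.mem_univ, ↓reduceIte,
    Finset.sum_const_zero, condX, margXY, margY]
  exact congrArg _ Finset.sum_comm

lemma margY'_eq_margY (y : Finset (Fin n)) :
    margY' l n a b y = margY (margXY (razJoint l n a b)) y / prAB l n a b := by
  rw [margY', sum_ite_eq_sum_razJoint l n a b fun _ _ y' => y' = y]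
  simp only [Finset.sum_ite_eq', Finset.mem_univ, ↓reduceIte, margY, margXY]
  exact congrArg (· / _) Finset.sum_comm

lemma sum_ite_lt_relEnt_condX'T2_eq (K : ℝ) :
    (∑ q : RazSample n, if K < relEnt (condX'T2 l n a b q.1.2.1) (condXT2 l n q.1.2.1)
        then razDist l n q * a q.2.1 * b q.2.2 else 0) =
      ∑ t, if K < relEnt (condX'T2 l n a b t) (condXT2 l n t)
        then margX (margTX (razJoint l n a b)) t else 0 := by
  rw [sum_ite_eq_sum_razJoint l n a b fun t _ _ => K < relEnt (condX'T2 l n a b t) (condXT2 l n t)]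
  refine Finset.sum_congr rfl fun t _ => ?_
  split_ifs <;> simp [margX, margTX]

end Bridge

lemma condXT2_eq_condX'T2_one (t : Finset (Fin n)) :
    condXT2 l n t = condX'T2 l n (fun _ => 1) (fun _ => 1) t := by
  funext x
  simp [condXT2, condX'T2]

lemma condXgY_eq_condX'Y'_one (y : Finset (Fin n)) :
    condXgY l n y = condX'Y' l n (fun _ => 1) (fun _ => 1) y := by
  funext x
  simp [condXgY, condX'Y']

def razSwap (q : RazSample n) : RazSample n := ((q.1.2.1, q.1.1, q.1.2.2), q.2.2, q.2.1)

lemma razSwap_involutive : Function.Involutive (razSwap (n := n)) := fun _ => rfl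

lemma sum_comp_razSwap (f : RazSample n → ℝ) : ∑ q, f (razSwap q) = ∑ q, f q :=
  Equiv.sum_comp (razSwap_involutive.toPerm _) f

lemma sum_ite_razSwap {P P' : RazSample n → Prop} [DecidablePred P] [DecidablePred P']
    {g g' : RazSample n → ℝ} (hP : ∀ q, P (razSwap q) ↔ P' q) (hg : ∀ q, g (razSwap q) = g' q) :
    (∑ q, if P q then g q else 0) = ∑ q, if P' q then g' q else 0 := by
  rw [← sum_comp_razSwap]
  exact Finset.sum_congr rfl fun q _ => if_congr (hP q) (hg q) rfl

lemma razDist_razSwap (q : RazSample n) : razDist l n (razSwap q) = razDist l n q := by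
  have hmem : razSwap q ∈ razSupp l n ↔ q ∈ razSupp l n := by
    rw [razSupp, Finset.mem_filter, Finset.mem_filter, ValidT, ValidT]
    simp only [razSwap, Finset.mem_univ, true_and, disjoint_comm]
    tauto
  simp only [razDist, hmem]

section Swap

variable (l n) (a b : Finset (Fin n) → ℝ)

lemma prAB_comm : prAB l n a b = prAB l n b a := by
  rw [prAB, prAB, ← sum_comp_razSwap]
  refine Finset.sum_congr rfl fun q _ => ?_
  rw [razDist_razSwap, razSwap, mul_right_comm]

lemma margX'_eq_margY' : margX' l n a b = margY' l n b a := by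
  funext x
  rw [margX', margY', prAB_comm]
  congr 1
  exact sum_ite_razSwap (fun q => Iff.rfl) fun q => by rw [razDist_razSwap, razSwap, mul_right_comm]

lemma condY'X'_eq_condX'Y' : condY'X' l n a b = condX'Y' l n b a := by
  funext x y
  rw [condY'X', condX'Y']
  congr 1 <;>
    exact sum_ite_razSwap (fun q => by simp only [razSwap, and_comm])
      fun q => by rw [razDist_razSwap, razSwap, mul_right_comm]

lemma condY'T1_eq_condX'T2 : condY'T1 l n a b = condX'T2 l n b a := by
  funext t y
  rw [condY'T1, condX'T2]
  congr 1 <;>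
    exact sum_ite_razSwap (fun q => Iff.rfl) fun q => by rw [razDist_razSwap, razSwap, mul_right_comm]

lemma condYgX_eq_condXgY : condYgX l n = condXgY l n := by
  funext x y
  rw [condYgX, condXgY]
  congr 1 <;>
    exact sum_ite_razSwap (fun q => by simp only [razSwap, and_comm]) fun q => razDist_razSwap q

lemma condYT1_eq_condXT2 : condYT1 l n = condXT2 l n := by
  funext t y
  rw [condYT1, condXT2]
  congr 1 <;> exact sum_ite_razSwap (fun q => Iff.rfl) fun q => razDist_razSwap q

lemma sum_ite_T1_eq_sum_ite_T2 (C : Finset (Fin n) → Prop) [DecidablePred C] :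
    (∑ q : RazSample n, if C q.1.1 then razDist l n q * a q.2.1 * b q.2.2 else 0) =
      ∑ q : RazSample n, if C q.1.2.1 then razDist l n q * b q.2.1 * a q.2.2 else 0 :=
  sum_ite_razSwap (fun q => Iff.rfl) fun q => by rw [razDist_razSwap, razSwap, mul_right_comm]

end Swap

theorem sum_ite_lt_relEnt_condX'T2_le (hn : n = 4 * l - 1) {a b : Finset (Fin n) → ℝ}
    (ha : ∀ x, 0 ≤ a x) (hb : ∀ y, 0 ≤ b y) (hAB : 0 < prAB l n a b) {K : ℝ} (hK : 0 < K) :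
    (∑ q : RazSample n, if K < relEnt (condX'T2 l n a b q.1.2.1) (condXT2 l n q.1.2.1)
        then razDist l n q * a q.2.1 * b q.2.2 else 0) ≤
      prAB l n a b * (∑ y, margY' l n a b y * relEnt (condX'Y' l n a b y) (condXgY l n y)) / K := by
  have hF : ∀ t x, 0 ≤ razF l n t x := fun t x => by unfold razF; split_ifs <;> norm_num
  have hG : ∀ t y, 0 ≤ razG l n t y := fun t y => by unfold razG; positivity
  have hΛ := razJoint_eq_condProd hn a b
  have hN : razJoint l n (fun _ => 1) (fun _ => 1) = condProd (razF l n) (razG l n) := by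
    simp only [razJoint_eq_condProd hn, mul_one]
  have hcrentY : prAB l n a b *
      (∑ y, margY' l n a b y * relEnt (condX'Y' l n a b y) (condXgY l n y)) =
      crentY (margXY (razJoint l n a b)) (margXY (razJoint l n (fun _ => 1) (fun _ => 1))) := by
    rw [Finset.mul_sum]
    refine Finset.sum_congr rfl fun y _ => ?_
    rw [margY'_eq_margY, condX'Y'_eq_condX, condXgY_eq_condX'Y'_one, condX'Y'_eq_condX]
    field_simp
  rw [sum_ite_lt_relEnt_condX'T2_eq, hcrentY]
  simp only [condX'T2_eq_condY, condXT2_eq_condX'T2_one, hΛ, hN]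
  calc _ ≤ crentX (margTX (condProd (fun t x => razF l n t x * a x) (fun t y => razG l n t y * b y)))
        (margTX (condProd (razF l n) (razG l n))) / K :=
        sum_ite_lt_le_div (fun t => Finset.sum_nonneg fun x _ => Finset.sum_nonneg fun y _ =>
          condProd_tilt_nonneg hF hG ha hb t x y)
          (relEnt_condY_margTX_nonneg hF hG ha hb) hK
    _ ≤ _ := div_le_div_of_nonneg_right (crentX_margTX_le_crentY_margXY hF hG ha hb) hK.le

theorem razborov_bad_T2_bound (hl : 0 < l) (hn : n = 4 * l - 1) {a b : Finset (Fin n) → ℝ}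
    (ha : ∀ x, 0 ≤ a x) (hb : ∀ y, 0 ≤ b y) (hAB : 0 < prAB l n a b) {δ : ℝ} (hδ : 0 < δ)
    (hE : ∑ y, margY' l n a b y * relEnt (condX'Y' l n a b y) (condXgY l n y) ≤ δ * n) :
    (∑ q : RazSample n, if 100 * δ * n < relEnt (condX'T2 l n a b q.1.2.1) (condXT2 l n q.1.2.1)
        then razDist l n q * a q.2.1 * b q.2.2 else 0) ≤ 1 / 100 * prAB l n a b := by
  have hn_pos : (0 : ℝ) < n := by exact_mod_cast (show 0 < n by omega)
  have hK : 0 < 100 * δ * n := by positivity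
  calc _ ≤ prAB l n a b * (∑ y, margY' l n a b y * relEnt (condX'Y' l n a b y) (condXgY l n y)) /
        (100 * δ * n) := sum_ite_lt_relEnt_condX'T2_le hn ha hb hAB hK
    _ ≤ prAB l n a b * (δ * n) / (100 * δ * n) := by gcongr
    _ = 1 / 100 * prAB l n a b := by field_simp

end Razborov

/-- With `(T,X,Y)` Razborov-distributed (`n = 4l − 1`), bits
`A, B` forming the Markov chain `A ↔ X ↔ Y ↔ B`, `Pr[A = B = 1] > 0`, primed
variables denoting conditioning on `A = B = 1`, and `δ > 0`:
(1) if `E_{y←Y'} S(X'_y ‖ X_y) ≤ δn`, then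
`Pr[A = B = 1 ∧ T₂ ∈ B¹_x] ≤ (1/100)·Pr[A = B = 1]` where
`B¹_x = {t₂ : S(X'_{t₂} ‖ X_{t₂}) > 100δn}`; and (2) symmetrically for `Y` with
`B¹_y = {t₁ : S(Y'_{t₁} ‖ Y_{t₁}) > 100δn}`. -/
theorem razborov_bad_partition_bound (l n : ℕ) (hl : 0 < l) (hn : n = 4 * l - 1)
    (a b : Finset (Fin n) → ℝ)
    (ha : ∀ x, 0 ≤ a x ∧ a x ≤ 1) (hb : ∀ y, 0 ≤ b y ∧ b y ≤ 1)
    (hAB : 0 < prAB l n a b) (δ : ℝ) (hδ : 0 < δ) :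
    ((∑ y : Finset (Fin n),
        margY' l n a b y * relEnt (condX'Y' l n a b y) (condXgY l n y)) ≤ δ * n →
      (∑ q : RazSample n,
          if 100 * δ * n < relEnt (condX'T2 l n a b q.1.2.1) (condXT2 l n q.1.2.1)
          then razDist l n q * a q.2.1 * b q.2.2 else 0) ≤
        (1 / 100) * prAB l n a b) ∧
    ((∑ x : Finset (Fin n),
        margX' l n a b x * relEnt (condY'X' l n a b x) (condYgX l n x)) ≤ δ * n →
      (∑ q : RazSample n,
          if 100 * δ * n < relEnt (condY'T1 l n a b q.1.1) (condYT1 l n q.1.1)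
          then razDist l n q * a q.2.1 * b q.2.2 else 0) ≤
        (1 / 100) * prAB l n a b) := by
  refine ⟨razborov_bad_T2_bound hl hn (fun x => (ha x).1) (fun y => (hb y).1) hAB hδ, fun hE => ?_⟩
  rw [margX'_eq_margY', condY'X'_eq_condX'Y', condYgX_eq_condXgY] at hE
  rw [condY'T1_eq_condX'T2, condYT1_eq_condXT2,
    sum_ite_T1_eq_sum_ite_T2 l n a b fun t => 100 * δ * n < relEnt (condX'T2 l n b a t) (condXT2 l n t),
    prAB_comm]
  rw [prAB_comm] at hAB
  exact razborov_bad_T2_bound hl hn (fun y => (hb y).1) (fun x => (ha x).1) hAB hδ hE
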